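/- arXiv:1809.01422 — 4 statements merged into one kernel-verified Lean document; each statement's English description precedes it below -/
import Mathlib

section
/- For any T > 0, any positive integer n, and any integers l₁ ≤ l₂ with −(n−1) ≤ l₁ and l₂ ≤ n−1, one has Σ_{l=l₁}^{l₂} |γ_l| ≤ ∫_{t_{l₁−1}}^{t_{l₂+1}} |R(τ)| dτ. -/
/-!
With `δ = T / n`, each `γ_l` is the average over `u ∈ [0, δ]` of `∫ R` over the block
`[lδ - u, (l + 1)δ - u]`, so it suffices to bound `∑ l, |∫ R|` over these blocks for each
fixed `u`. For `u ∈ [0, δ]` the blocks with `l₁ ≤ l ≤ l₂` are adjacent and together lie in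
`[(l₁ - 1)δ, (l₂ + 1)δ]`, whence the sum is at most `∫ |R|` over that interval.
-/

open MeasureTheory Filter Finset Real

/-- `γ_l = (n/T) ∫_{t_0}^{t_1} ∫_{t_l}^{t_{l+1}} R(v-u) dv du`, where `t_i = i T / n`. -/
noncomputable def gam (R : ℝ → ℝ) (T : ℝ) (n : ℕ) (l : ℤ) : ℝ :=
  ((n : ℝ) / T) *
    ∫ u in (0:ℝ)..(T / n), ∫ v in ((l : ℝ) * T / n)..(((l : ℝ) + 1) * T / n), R (v - u)

theorem sum_integral_adjacent_intervals_Icc_int {E : Type*} [NormedAddCommGroup E]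
    [NormedSpace ℝ E] {μ : Measure ℝ} {f : ℝ → E}
    (hf : ∀ a b, IntervalIntegrable f μ a b) (g : ℤ → ℝ) {l₁ l₂ : ℤ} (h : l₁ ≤ l₂) :
    ∑ l ∈ Icc l₁ l₂, ∫ τ in g l..g (l + 1), f τ ∂μ = ∫ τ in g l₁..g (l₂ + 1), f τ ∂μ := by
  induction l₂, h using Int.leInduction with
  | base => simp
  | succ m hm ih =>
    rw [← insert_Icc_right_eq_Icc_add_one (by omega), sum_insert (by simp), ih, add_comm,
      intervalIntegral.integral_add_adjacent_intervals (hf _ _) (hf _ _)]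

theorem continuous_integral_comp_sub_right {R : ℝ → ℝ}
    (hR : ∀ a b, IntervalIntegrable R volume a b) (a b : ℝ) :
    Continuous fun u ↦ ∫ v in a..b, R (v - u) := by
  have hF := intervalIntegral.continuous_primitive hR 0
  have h : (fun u ↦ ∫ v in a..b, R (v - u)) =
      fun u ↦ (∫ τ in 0..b - u, R τ) - ∫ τ in 0..a - u, R τ := by
    funext u
    rw [intervalIntegral.integral_comp_sub_right,
      intervalIntegral.integral_interval_sub_left (hR _ _) (hR _ _)]
  rw [h]
  exact (hF.comp (continuous_sub_left b)).sub (hF.comp (continuous_sub_left a))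

theorem sum_abs_integral_shifted_blocks_le {R : ℝ → ℝ}
    (hR : ∀ a b, IntervalIntegrable R volume a b) {δ u : ℝ} (hu : u ∈ Set.Icc 0 δ)
    {l₁ l₂ : ℤ} (hl : l₁ ≤ l₂) :
    ∑ l ∈ Icc l₁ l₂, |∫ v in l * δ..(l + 1) * δ, R (v - u)| ≤
      ∫ τ in (l₁ - 1) * δ..(l₂ + 1) * δ, |R τ| := by
  obtain ⟨hu0, huδ⟩ := hu
  have hδ : 0 ≤ δ := hu0.trans huδ
  have hRabs : ∀ a b, IntervalIntegrable (fun τ ↦ |R τ|) volume a b := fun a b ↦ (hR a b).abs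
  have hl' : (l₁ : ℝ) ≤ l₂ := by exact_mod_cast hl
  calc ∑ l ∈ Icc l₁ l₂, |∫ v in l * δ..(l + 1) * δ, R (v - u)|
      ≤ ∑ l ∈ Icc l₁ l₂, ∫ τ in l * δ - u..(l + 1) * δ - u, |R τ| := by
        refine sum_le_sum fun l _ ↦ ?_
        rw [intervalIntegral.integral_comp_sub_right]
        exact intervalIntegral.abs_integral_le_integral_abs (by nlinarith)
    _ = ∫ τ in l₁ * δ - u..(l₂ + 1) * δ - u, |R τ| := by
        simpa using sum_integral_adjacent_intervals_Icc_int hRabs (fun l : ℤ ↦ l * δ - u) hl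
    _ ≤ ∫ τ in (l₁ - 1) * δ..(l₂ + 1) * δ, |R τ| :=
        intervalIntegral.integral_mono_interval (by nlinarith) (by nlinarith) (by nlinarith)
          (.of_forall fun τ ↦ abs_nonneg _) (hRabs _ _)

theorem sum_abs_average_le_of_forall_sum_abs_le {ι : Type*} (s : Finset ι) {g : ι → ℝ → ℝ}
    {a b C : ℝ} (hab : a ≤ b) (hg : ∀ i ∈ s, IntervalIntegrable (g i) volume a b)
    (hC : ∀ u ∈ Set.Icc a b, ∑ i ∈ s, |g i u| ≤ C) :
    ∑ i ∈ s, |(b - a)⁻¹ * ∫ u in a..b, g i u| ≤ C := by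
  have hC0 : 0 ≤ C := (sum_nonneg fun i _ ↦ abs_nonneg _).trans (hC a ⟨le_rfl, hab⟩)
  have hba : 0 ≤ (b - a)⁻¹ := inv_nonneg.2 (sub_nonneg.2 hab)
  calc ∑ i ∈ s, |(b - a)⁻¹ * ∫ u in a..b, g i u|
      ≤ (b - a)⁻¹ * ∑ i ∈ s, ∫ u in a..b, |g i u| := by
        rw [mul_sum]
        refine sum_le_sum fun i _ ↦ ?_
        rw [abs_mul, abs_of_nonneg hba]
        exact mul_le_mul_of_nonneg_left (intervalIntegral.abs_integral_le_integral_abs hab) hba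
    _ = (b - a)⁻¹ * ∫ u in a..b, ∑ i ∈ s, |g i u| := by
        rw [intervalIntegral.integral_finsetSum fun i hi ↦ (hg i hi).abs]
    _ ≤ (b - a)⁻¹ * ∫ _ in a..b, C := by
        gcongr
        have hsum : IntervalIntegrable (fun u ↦ ∑ i ∈ s, |g i u|) volume a b := by
          simpa only [Finset.sum_fn] using IntervalIntegrable.sum s fun i hi ↦ (hg i hi).abs
        exact intervalIntegral.integral_mono_on hab hsum intervalIntegrable_const hC
    _ ≤ C := by
        rw [intervalIntegral.integral_const, smul_eq_mul, ← mul_assoc]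
        exact mul_le_of_le_one_left hC0 (inv_mul_le_one_of_le₀ le_rfl (sub_nonneg.2 hab))

theorem stmt_0_general (R : ℝ → ℝ) (hCont : Continuous R)
    (T : ℝ) (hT : 0 < T) (n : ℕ)
    (l₁ l₂ : ℤ) (hl : l₁ ≤ l₂) :
    ∑ l ∈ Finset.Icc l₁ l₂, |gam R T n l| ≤
      ∫ τ in (((l₁ : ℝ) - 1) * T / n)..(((l₂ : ℝ) + 1) * T / n), |R τ| := by
  have hR : ∀ a b, IntervalIntegrable R volume a b := hCont.intervalIntegrable
  have hδ : 0 ≤ T / n := by positivity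
  have hgam : ∀ l, gam R T n l =
      (T / n - 0)⁻¹ * ∫ u in 0..T / n, ∫ v in l * (T / n)..(l + 1) * (T / n), R (v - u) := by
    intro l
    simp only [gam, sub_zero, inv_div, mul_div_assoc]
  simp only [hgam, mul_div_assoc]
  exact sum_abs_average_le_of_forall_sum_abs_le _ hδ
    (fun l _ ↦ (continuous_integral_comp_sub_right hR _ _).intervalIntegrable _ _)
    fun u hu ↦ sum_abs_integral_shifted_blocks_le hR hu hl

theorem stmt_0 (R : ℝ → ℝ) (hEven : ∀ τ, R (-τ) = R τ) (hCont : Continuous R)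
    (hBdd : ∃ M, ∀ τ, |R τ| ≤ M) (hInt : Integrable R)
    (T : ℝ) (hT : 0 < T) (n : ℕ) (hn : 0 < n)
    (l₁ l₂ : ℤ) (hl : l₁ ≤ l₂) (hl₁ : -((n : ℤ) - 1) ≤ l₁) (hl₂ : l₂ ≤ (n : ℤ) - 1) :
    ∑ l ∈ Finset.Icc l₁ l₂, |gam R T n l| ≤
      ∫ τ in (((l₁ : ℝ) - 1) * T / n)..(((l₂ : ℝ) + 1) * T / n), |R τ| :=
  stmt_0_general R hCont T hT n l₁ l₂ hl
end

section
/- For any T > 0 and any positive integer n, the operator norm of the Toeplitz matrix A_{T,n} satisfies ‖A_{T,n}‖₂ ≤ ∫_ℝ |R(τ)| dτ; in particular ‖A_{T,n}‖₂ is bounded uniformly over all T > 0 and n ∈ ℕ. -/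
/-!
By the Schur test, `‖A‖₂ ≤ C` as soon as all absolute row and column sums of `A` are at most
`C`. Every row and every column of `A_{T,n}` consists of `n` consecutive coefficients
`γ_c, …, γ_{c+n-1}`, and `|γ_l| ≤ (n/T) ∫_{t_0}^{t_1} |∫_{t_l}^{t_{l+1}} R(v-u) dv| du`. For
fixed `u` the `n` inner intervals tile `[t_c, t_{c+n}]`, so the inner integrals add up in
absolute value to at most `∫ |R|`, and averaging over `u ∈ [0, T/n]` gives the bound.
-/

open MeasureTheory Filter Finset Real

/-- The `n × n` Toeplitz matrix `A_{T,n}` with `(i,j)`-entry `γ_{j-i}`. -/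
noncomputable def AMat (R : ℝ → ℝ) (T : ℝ) (n : ℕ) : Matrix (Fin n) (Fin n) ℝ :=
  fun i j => gam R T n ((j : ℤ) - (i : ℤ))

namespace Matrix

variable {n : Type*} [Fintype n] [DecidableEq n]

theorem norm_toEuclideanCLM_le_of_sum_abs_le (A : Matrix n n ℝ) {C : ℝ} (hC : 0 ≤ C)
    (hrow : ∀ i, ∑ j, |A i j| ≤ C) (hcol : ∀ j, ∑ i, |A i j| ≤ C) :
    ‖toEuclideanCLM (𝕜 := ℝ) A‖ ≤ C := by
  refine ContinuousLinearMap.opNorm_le_bound _ hC fun x => ?_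
  refine (sq_le_sq₀ (norm_nonneg _) (by positivity)).mp ?_
  -- Cauchy–Schwarz with the weights `|A i j|`
  have hrow_sq (i : n) : (∑ j, A i j * x j) ^ 2 ≤ C * ∑ j, |A i j| * x j ^ 2 := by
    refine (sum_sq_le_sum_mul_sum_of_sq_le_mul _ (f := fun j => |A i j|)
      (g := fun j => |A i j| * x j ^ 2) (fun _ _ => abs_nonneg _)
      (fun _ _ => by positivity) fun j _ => ?_).trans ?_
    · exact le_of_eq (by rw [mul_pow, ← sq_abs (A i j)]; ring)
    · exact mul_le_mul_of_nonneg_right (hrow i) (by positivity)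
  calc ‖toEuclideanCLM (𝕜 := ℝ) A x‖ ^ 2 = ∑ i, (∑ j, A i j * x j) ^ 2 := by
        simp [EuclideanSpace.norm_sq_eq, mulVec, dotProduct]
    _ ≤ ∑ i, C * ∑ j, |A i j| * x j ^ 2 := sum_le_sum fun i _ => hrow_sq i
    _ = C * ∑ j, (∑ i, |A i j|) * x j ^ 2 := by
        rw [← mul_sum, sum_comm]; simp_rw [sum_mul]
    _ ≤ C * ∑ j, C * x j ^ 2 := by gcongr with j; exact hcol j
    _ = (C * ‖x‖) ^ 2 := by
        rw [mul_pow, EuclideanSpace.norm_sq_eq, mul_sum, mul_sum]; simp [sq, mul_assoc]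

end Matrix

section IntervalIntegral

variable {f : ℝ → ℝ}

theorem sum_abs_intervalIntegral_le_integral_abs (hf : Integrable f) {a : ℕ → ℝ}
    (ha : Monotone a) (N : ℕ) :
    ∑ k ∈ range N, |∫ v in a k..a (k + 1), f v| ≤ ∫ v, |f v| :=
  calc ∑ k ∈ range N, |∫ v in a k..a (k + 1), f v|
      ≤ ∑ k ∈ range N, ∫ v in a k..a (k + 1), |f v| :=
        sum_le_sum fun k _ => intervalIntegral.abs_integral_le_integral_abs (ha k.le_succ)
    _ = ∫ v in a 0..a N, |f v| :=
        intervalIntegral.sum_integral_adjacent_intervals fun _ _ => hf.abs.intervalIntegrable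
    _ ≤ ∫ v, |f v| := by
        rw [intervalIntegral.integral_of_le (ha N.zero_le)]
        exact setIntegral_le_integral hf.abs (Eventually.of_forall fun _ => abs_nonneg _)

theorem continuous_intervalIntegral_comp_sub_right (hf : Integrable f) (a b : ℝ) :
    Continuous fun u => ∫ v in a..b, f (v - u) := by
  have hF : Continuous fun x => ∫ t in (0 : ℝ)..x, f t :=
    intervalIntegral.continuous_primitive (fun _ _ => hf.intervalIntegrable) 0
  have h (u : ℝ) : ∫ v in a..b, f (v - u) =
      (∫ t in (0 : ℝ)..b - u, f t) - ∫ t in (0 : ℝ)..a - u, f t := by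
    rw [intervalIntegral.integral_comp_sub_right, intervalIntegral.integral_interval_sub_left
      hf.intervalIntegrable hf.intervalIntegrable]
  simp_rw [h]
  fun_prop

theorem sum_abs_intervalIntegral_intervalIntegral_comp_sub_le (hf : Integrable f) {a : ℕ → ℝ}
    (ha : Monotone a) {δ : ℝ} (hδ : 0 ≤ δ) (N : ℕ) :
    ∑ k ∈ range N, |∫ u in 0..δ, ∫ v in a k..a (k + 1), f (v - u)| ≤ δ * ∫ v, |f v| := by
  have hcont (k : ℕ) : Continuous fun u => |∫ v in a k..a (k + 1), f (v - u)| :=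
    (continuous_intervalIntegral_comp_sub_right hf _ _).abs
  calc ∑ k ∈ range N, |∫ u in 0..δ, ∫ v in a k..a (k + 1), f (v - u)|
      ≤ ∑ k ∈ range N, ∫ u in 0..δ, |∫ v in a k..a (k + 1), f (v - u)| :=
        sum_le_sum fun k _ => intervalIntegral.abs_integral_le_integral_abs hδ
    _ = ∫ u in 0..δ, ∑ k ∈ range N, |∫ v in a k..a (k + 1), f (v - u)| :=
        (intervalIntegral.integral_finsetSum fun k _ => (hcont k).intervalIntegrable _ _).symm
    _ ≤ ∫ _ in 0..δ, ∫ v, |f v| := by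
        refine intervalIntegral.integral_mono_on hδ
          ((continuous_finsetSum _ fun k _ => hcont k).intervalIntegrable _ _)
          intervalIntegrable_const fun u _ => ?_
        simpa only [integral_sub_right_eq_self (fun v => |f v|) u] using
          sum_abs_intervalIntegral_le_integral_abs (hf.comp_sub_right u) ha N
    _ = δ * ∫ v, |f v| := by simp

end IntervalIntegral

theorem sum_abs_gam_le (R : ℝ → ℝ) (hR : Integrable R) {T : ℝ} (hT : 0 < T) (n : ℕ) (c : ℤ) :
    ∑ k ∈ range n, |gam R T n (c + k)| ≤ ∫ τ, |R τ| := by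
  set a : ℕ → ℝ := fun k => (c + k) * T / n
  have ha : Monotone a := monotone_nat_of_le_succ fun k => by dsimp [a]; gcongr; simp
  have hgam (k : ℕ) : gam R T n (c + k) =
      (n / T) * ∫ u in 0..T / n, ∫ v in a k..a (k + 1), R (v - u) := by
    simp only [gam, a]; push_cast; ring_nf
  calc ∑ k ∈ range n, |gam R T n (c + k)|
      = (n / T) * ∑ k ∈ range n, |∫ u in 0..T / n, ∫ v in a k..a (k + 1), R (v - u)| := by
        simp_rw [hgam, abs_mul, abs_of_nonneg (by positivity : (0 : ℝ) ≤ n / T), mul_sum]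
    _ ≤ (n / T) * ((T / n) * ∫ τ, |R τ|) := by
        gcongr
        exact sum_abs_intervalIntegral_intervalIntegral_comp_sub_le hR ha (by positivity) n
    _ ≤ ∫ τ, |R τ| := by
        rw [← mul_assoc, div_mul_div_comm, mul_comm T]
        exact mul_le_of_le_one_left (integral_nonneg fun _ => abs_nonneg _) (div_self_le_one _)

section Toeplitz

variable {g : ℤ → ℝ} {C : ℝ} {n : ℕ}

theorem Fin.sum_abs_comp_sub_const_le (h : ∀ c : ℤ, ∑ k ∈ range n, |g (c + k)| ≤ C) (i : Fin n) :
    ∑ j : Fin n, |g (j - i)| ≤ C := by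
  simpa [← Fin.sum_univ_eq_sum_range, sub_eq_neg_add] using h (-i)

theorem Fin.sum_abs_comp_const_sub_le (h : ∀ c : ℤ, ∑ k ∈ range n, |g (c + k)| ≤ C) (j : Fin n) :
    ∑ i : Fin n, |g (j - i)| ≤ C := by
  rw [Fin.sum_univ_eq_sum_range (fun k => |g (j - k)|), ← sum_range_reflect]
  refine le_of_eq_of_le (sum_congr rfl fun k hk => ?_) (h (j - n + 1))
  have hkn := mem_range.1 hk
  congr 2
  omega

end Toeplitz

theorem stmt_3_general (R : ℝ → ℝ) (hInt : Integrable R) (T : ℝ) (hT : 0 < T) (n : ℕ) :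
    ‖Matrix.toEuclideanCLM (𝕜 := ℝ) (AMat R T n)‖ ≤ ∫ τ, |R τ| :=
  Matrix.norm_toEuclideanCLM_le_of_sum_abs_le _ (integral_nonneg fun _ => abs_nonneg _)
    (Fin.sum_abs_comp_sub_const_le (sum_abs_gam_le R hInt hT n))
    (Fin.sum_abs_comp_const_sub_le (sum_abs_gam_le R hInt hT n))

theorem stmt_3 (R : ℝ → ℝ) (hEven : ∀ τ, R (-τ) = R τ) (hCont : Continuous R)
    (hBdd : ∃ M, ∀ τ, |R τ| ≤ M) (hInt : Integrable R)
    (T : ℝ) (hT : 0 < T) (n : ℕ) (hn : 0 < n) :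
    ‖Matrix.toEuclideanCLM (𝕜 := ℝ) (AMat R T n)‖ ≤ ∫ τ, |R τ| :=
  stmt_3_general R hInt T hT n
end

section
/- For any T > 0 and any positive integer n, the Frobenius norm of the Toeplitz matrix A_{T,n} satisfies ‖A_{T,n}‖_F²/T ≤ (∫_ℝ |R(τ)| dτ)·(sup_{τ∈ℝ} |R(τ)|); in particular ‖A_{T,n}‖_F²/T is bounded uniformly over all T > 0 and n ∈ ℕ. -/
/-!
Each entry satisfies `|γ_l| ≤ S · T/n` with `S = sup |R|`, since `γ_l` is `n/T` times an integral
over a `T/n × T/n` square. Along a row the `v`-intervals `[t_l, t_{l+1}]` are disjoint, so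
`∑_l |γ_l| ≤ (n/T) ∫_0^{T/n} ∫_ℝ |R(v - u)| dv du = ∫ |R|`. Bounding `γ² ≤ (S T/n) |γ|` and
summing over the `n` rows gives `‖A_{T,n}‖_F² ≤ T · S · ∫ |R|`.
-/

open MeasureTheory Filter Finset Real
open scoped Function

lemma sum_sum_sq_le_of_abs_le_of_sum_abs_le {ι κ : Type*} [Fintype ι] [Fintype κ]
    (a : ι → κ → ℝ) {c r : ℝ} (hc0 : 0 ≤ c) (hc : ∀ i j, |a i j| ≤ c)
    (hr : ∀ i, ∑ j, |a i j| ≤ r) :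
    ∑ i, ∑ j, a i j ^ 2 ≤ Fintype.card ι * (c * r) := by
  calc ∑ i, ∑ j, a i j ^ 2 ≤ ∑ i : ι, c * ∑ j, |a i j| := by
        gcongr with i
        rw [Finset.mul_sum]
        gcongr with j
        rw [← sq_abs, sq]
        exact mul_le_mul_of_nonneg_right (hc i j) (abs_nonneg _)
    _ ≤ ∑ _i : ι, c * r := by gcongr with i; exact hr i
    _ = Fintype.card ι * (c * r) := by simp

lemma sum_intervalIntegral_le_integral {f : ℝ → ℝ} (hf : Integrable f) (hf0 : 0 ≤ f)
    {h : ℝ} (hh : 0 ≤ h) (s : Finset ℤ) :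
    ∑ l ∈ s, ∫ v in l * h..(l + 1) * h, f v ≤ ∫ v, f v := by
  have hdisj : Pairwise (Disjoint on fun l : ℤ => Set.Ioc ((l : ℝ) * h) ((l + 1) * h)) := by
    simpa [zsmul_eq_mul] using Set.pairwise_disjoint_Ioc_add_zsmul (0 : ℝ) h
  calc ∑ l ∈ s, ∫ v in l * h..(l + 1) * h, f v
      = ∫ v in ⋃ l ∈ s, Set.Ioc ((l : ℝ) * h) ((l + 1) * h), f v := by
        rw [integral_biUnion_finset s (fun _ _ => measurableSet_Ioc)
          (hdisj.set_pairwise _) (fun _ _ => hf.integrableOn)]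
        exact Finset.sum_congr rfl fun l _ =>
          intervalIntegral.integral_of_le (by nlinarith)
    _ ≤ ∫ v, f v := setIntegral_le_integral hf (Eventually.of_forall hf0)

lemma abs_integral_integral_le_of_abs_le {K : ℝ → ℝ → ℝ} {S : ℝ} (hS : ∀ u v, |K u v| ≤ S)
    (a b c d : ℝ) :
    |∫ u in c..d, ∫ v in a..b, K u v| ≤ S * |b - a| * |d - c| := by
  simpa only [Real.norm_eq_abs] using intervalIntegral.norm_integral_le_of_norm_le_const
    fun u _ => intervalIntegral.norm_integral_le_of_norm_le_const (a := a) (b := b)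
      fun v _ => (Real.norm_eq_abs (K u v)).trans_le (hS u v)

lemma abs_integral_integral_le_integral_integral_abs {K : ℝ → ℝ → ℝ}
    (hK : Continuous K.uncurry) {a b c d : ℝ} (hab : a ≤ b) (hcd : c ≤ d) :
    |∫ u in c..d, ∫ v in a..b, K u v| ≤ ∫ u in c..d, ∫ v in a..b, |K u v| := by
  have hKabs : Continuous (fun u v => |K u v|).uncurry := hK.abs
  calc |∫ u in c..d, ∫ v in a..b, K u v|
      ≤ ∫ u in c..d, |∫ v in a..b, K u v| := intervalIntegral.abs_integral_le_integral_abs hcd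
    _ ≤ ∫ u in c..d, ∫ v in a..b, |K u v| := by
      open intervalIntegral in
      exact integral_mono_on hcd
        ((continuous_parametric_intervalIntegral_of_continuous' hK a b).abs.intervalIntegrable _ _)
        ((continuous_parametric_intervalIntegral_of_continuous' hKabs a b).intervalIntegrable _ _)
        fun u _ => abs_integral_le_integral_abs hab

lemma gam_eq (R : ℝ → ℝ) (T : ℝ) (n : ℕ) (l : ℤ) :
    gam R T n l = (T / n)⁻¹ *
      ∫ u in (0 : ℝ)..T / n, ∫ v in l * (T / n)..(l + 1) * (T / n), R (v - u) := by
  simp only [gam, inv_div, mul_div_assoc]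

section

variable {R : ℝ → ℝ} {T : ℝ} {n : ℕ}

lemma abs_gam_le {S : ℝ} (hS : ∀ τ, |R τ| ≤ S) (hT : 0 < T) (hn : 0 < n) (l : ℤ) :
    |gam R T n l| ≤ S * (T / n) := by
  have hh : 0 < T / n := by positivity
  rw [gam_eq, abs_mul, abs_inv, abs_of_pos hh]
  calc (T / n)⁻¹ * |∫ u in (0 : ℝ)..T / n, ∫ v in l * (T / n)..(l + 1) * (T / n), R (v - u)|
      ≤ (T / n)⁻¹ * (S * |(l + 1) * (T / n) - l * (T / n)| * |T / n - 0|) := by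
        gcongr
        exact abs_integral_integral_le_of_abs_le (fun u v => hS (v - u)) _ _ _ _
    _ = S * (T / n) := by
        rw [show (l + 1) * (T / n) - l * (T / n) = T / n by ring, sub_zero, abs_of_pos hh]
        field_simp

lemma sum_abs_gam_le_s5 (hCont : Continuous R) (hInt : Integrable R) (hT : 0 < T) (hn : 0 < n)
    (s : Finset ℤ) :
    ∑ l ∈ s, |gam R T n l| ≤ ∫ τ, |R τ| := by
  set h := T / n
  have hh : 0 < h := by positivity
  have hF : ∀ l : ℤ, Continuous fun u => ∫ v in l * h..(l + 1) * h, |R (v - u)| := fun l =>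
    intervalIntegral.continuous_parametric_intervalIntegral_of_continuous'
      (f := fun u v => |R (v - u)|) (by fun_prop) _ _
  calc ∑ l ∈ s, |gam R T n l|
      ≤ ∑ l ∈ s, h⁻¹ * ∫ u in (0 : ℝ)..h, ∫ v in l * h..(l + 1) * h, |R (v - u)| := by
        gcongr with l
        rw [gam_eq, abs_mul, abs_of_pos (inv_pos.2 hh)]
        gcongr
        exact abs_integral_integral_le_integral_integral_abs (by fun_prop)
          (by nlinarith) hh.le
    _ = h⁻¹ * ∫ u in (0 : ℝ)..h, ∑ l ∈ s, ∫ v in l * h..(l + 1) * h, |R (v - u)| := by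
        rw [← Finset.mul_sum,
          intervalIntegral.integral_finsetSum fun l _ => (hF l).intervalIntegrable _ _]
    _ ≤ h⁻¹ * ∫ _u in (0 : ℝ)..h, ∫ τ, |R τ| := by
        gcongr
        refine intervalIntegral.integral_mono_on hh.le ?_ intervalIntegrable_const fun u _ => ?_
        · exact (continuous_finsetSum _ fun l _ => hF l).intervalIntegrable _ _
        · calc ∑ l ∈ s, ∫ v in l * h..(l + 1) * h, |R (v - u)|
              ≤ ∫ v, |R (v - u)| :=
                sum_intervalIntegral_le_integral (hInt.abs.comp_sub_right u)
                  (fun _ => abs_nonneg _) hh.le s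
            _ = ∫ τ, |R τ| := integral_sub_right_eq_self (fun τ => |R τ|) u
    _ = ∫ τ, |R τ| := by
        rw [intervalIntegral.integral_const, smul_eq_mul, sub_zero, inv_mul_cancel_left₀ hh.ne']

lemma sum_abs_AMat_row_le (hCont : Continuous R) (hInt : Integrable R) (hT : 0 < T)
    (hn : 0 < n) (i : Fin n) :
    ∑ j, |AMat R T n i j| ≤ ∫ τ, |R τ| := by
  have hinj : Set.InjOn (fun j : Fin n => (j : ℤ) - i) ↑(univ : Finset (Fin n)) :=
    fun j _ k _ hjk => Fin.ext (by simpa using hjk)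
  calc ∑ j, |AMat R T n i j|
      = ∑ l ∈ univ.image (fun j : Fin n => (j : ℤ) - i), |gam R T n l| :=
        (Finset.sum_image (f := fun l => |gam R T n l|) hinj).symm
    _ ≤ ∫ τ, |R τ| := sum_abs_gam_le_s5 hCont hInt hT hn _

end

theorem stmt_5_general (R : ℝ → ℝ) (hCont : Continuous R)
    (hBdd : ∃ M, ∀ τ, |R τ| ≤ M) (hInt : Integrable R)
    (T : ℝ) (hT : 0 < T) (n : ℕ) (hn : 0 < n) :
    (∑ i, ∑ j, (AMat R T n i j) ^ 2) / T ≤ (∫ τ, |R τ|) * (⨆ τ, |R τ|) := by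
  obtain ⟨M, hM⟩ := hBdd
  have hS : ∀ τ, |R τ| ≤ ⨆ τ, |R τ| :=
    le_ciSup ⟨M, by rintro _ ⟨τ, rfl⟩; exact hM τ⟩
  have hS0 : 0 ≤ (⨆ τ, |R τ|) * (T / n) :=
    mul_nonneg ((abs_nonneg _).trans (hS 0)) (by positivity)
  rw [div_le_iff₀ hT]
  calc ∑ i, ∑ j, (AMat R T n i j) ^ 2
      ≤ Fintype.card (Fin n) * ((⨆ τ, |R τ|) * (T / n) * ∫ τ, |R τ|) :=
        sum_sum_sq_le_of_abs_le_of_sum_abs_le _ hS0 (fun i j => abs_gam_le hS hT hn _)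
          (sum_abs_AMat_row_le hCont hInt hT hn)
    _ = (∫ τ, |R τ|) * (⨆ τ, |R τ|) * T := by
        rw [Fintype.card_fin]
        field_simp

theorem stmt_5 (R : ℝ → ℝ) (hEven : ∀ τ, R (-τ) = R τ) (hCont : Continuous R)
    (hBdd : ∃ M, ∀ τ, |R τ| ≤ M) (hInt : Integrable R)
    (T : ℝ) (hT : 0 < T) (n : ℕ) (hn : 0 < n) :
    (∑ i, ∑ j, (AMat R T n i j) ^ 2) / T ≤ (∫ τ, |R τ|) * (⨆ τ, |R τ|) :=
  stmt_5_general R hCont hBdd hInt T hT n hn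
end

section
/- For every ε > 0 there exists T₀ > 0 such that for every T ≥ T₀ there exists a positive integer n₀ such that for all n ≥ n₀, ‖A_{T,n} − Â_{T,n}‖_F²/T ≤ ε. -/
open MeasureTheory Filter Finset Real

/-- `γ̂_0 = γ_0` and `γ̂_k = γ_k + γ_{n-k}` for `1 ≤ k ≤ n-1`. -/
noncomputable def gamHat (R : ℝ → ℝ) (T : ℝ) (n : ℕ) (k : ℕ) : ℝ :=
  if k = 0 then gam R T n 0 else gam R T n k + gam R T n ((n : ℤ) - k)

/-- The `n × n` circulant matrix `Â_{T,n}` with `(i,j)`-entry `γ̂_{(j-i) mod n}`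
(`j - i` is subtraction in `Fin n`, i.e. subtraction mod `n`). -/
noncomputable def AHat (R : ℝ → ℝ) (T : ℝ) (n : ℕ) : Matrix (Fin n) (Fin n) ℝ :=
  fun i j => gamHat R T n ((j - i : Fin n) : ℕ)

lemma gam_neg (R : ℝ → ℝ) (hEven : ∀ τ, R (-τ) = R τ) (T : ℝ) (n : ℕ) (l : ℤ) :
    gam R T n (-l) = gam R T n l := by
  unfold gam
  congr 1
  have h1 : ∀ u : ℝ,
      (∫ v in (((-l : ℤ) : ℝ) * T / n)..((((-l : ℤ) : ℝ) + 1) * T / n), R (v - u))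
      = ∫ v in ((l : ℝ) * T / n)..(((l : ℝ) + 1) * T / n), R (v - (T / n - u)) := by
    intro u
    have e1 : ((-l : ℤ) : ℝ) * T / n = -((l : ℝ) * T / n) := by push_cast; ring
    have e2 : (((-l : ℤ) : ℝ) + 1) * T / n = -((((l : ℝ) - 1)) * T / n) := by push_cast; ring
    rw [e1, e2]
    have step1 := intervalIntegral.integral_comp_neg (a := ((l : ℝ) - 1) * T / n)
      (b := (l : ℝ) * T / n) (fun v => R (v - u))
    rw [← step1]
    have step2 : (∫ x in (((l : ℝ) - 1) * T / n)..((l : ℝ) * T / n), R (-x - u))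
        = ∫ x in (((l : ℝ) - 1) * T / n)..((l : ℝ) * T / n), R (x + u) := by
      apply intervalIntegral.integral_congr
      intro x _
      show R (-x - u) = R (x + u)
      rw [show -x - u = -(x + u) by ring, hEven]
    rw [step2]
    have step3 := intervalIntegral.integral_comp_sub_right
      (a := (l : ℝ) * T / n) (b := ((l : ℝ) + 1) * T / n) (fun x => R (x + u)) (T / n)
    have e3 : (l : ℝ) * T / n - T / n = ((l : ℝ) - 1) * T / n := by ring
    have e4 : ((l : ℝ) + 1) * T / n - T / n = (l : ℝ) * T / n := by ring
    rw [e3, e4] at step3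
    rw [← step3]
    apply intervalIntegral.integral_congr
    intro x _
    show R (x - T / n + u) = R (x - (T / n - u))
    rw [show x - T / n + u = x - (T / n - u) by ring]
  rw [intervalIntegral.integral_congr (g :=
      fun u => ∫ v in ((l : ℝ) * T / n)..(((l : ℝ) + 1) * T / n), R (v - (T / n - u)))
      (fun u _ => h1 u)]
  have step4 := intervalIntegral.integral_comp_sub_left (a := (0:ℝ)) (b := T / n)
    (fun w => ∫ v in ((l : ℝ) * T / n)..(((l : ℝ) + 1) * T / n), R (v - w)) (T / n)
  simpa using step4

lemma gam_abs_le_int (R : ℝ → ℝ) (hCont : Continuous R) {T : ℝ} (hT : 0 < T) {n : ℕ}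
    (hn : 0 < n) (k : ℤ) :
    |gam R T n k| ≤ ∫ τ in (((k : ℝ) - 1) * (T / n))..(((k : ℝ) + 1) * (T / n)), |R τ| := by
  have hh : 0 < T / n := div_pos hT (by exact_mod_cast hn)
  set I := ∫ τ in (((k : ℝ) - 1) * (T / n))..(((k : ℝ) + 1) * (T / n)), |R τ| with hI
  have hbound : ∀ u ∈ Set.uIoc (0:ℝ) (T / n),
      ‖∫ v in ((k : ℝ) * T / n)..(((k : ℝ) + 1) * T / n), R (v - u)‖ ≤ I := by
    intro u hu
    rw [Set.uIoc_of_le hh.le] at hu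
    obtain ⟨hu0, hu1⟩ := hu
    rw [intervalIntegral.integral_comp_sub_right (fun v => R v) u]
    have hle : (k : ℝ) * T / n - u ≤ ((k : ℝ) + 1) * T / n - u := by
      have : ((k : ℝ) + 1) * T / n = (k : ℝ) * T / n + T / n := by ring
      linarith
    calc ‖∫ v in ((k : ℝ) * T / n - u)..(((k : ℝ) + 1) * T / n - u), R v‖
        ≤ ∫ v in ((k : ℝ) * T / n - u)..(((k : ℝ) + 1) * T / n - u), |R v| := by
          simpa [Real.norm_eq_abs] using
            intervalIntegral.abs_integral_le_integral_abs (f := R) hle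
      _ ≤ I := by
          apply intervalIntegral.integral_mono_interval
          · have : (k : ℝ) * T / n = ((k : ℝ) - 1) * (T / n) + T / n := by ring
            linarith
          · exact hle
          · have : ((k : ℝ) + 1) * T / n = ((k : ℝ) + 1) * (T / n) := by ring
            linarith
          · exact Eventually.of_forall fun τ => abs_nonneg _
          · exact (hCont.abs).intervalIntegrable _ _
  have hnorm := intervalIntegral.norm_integral_le_of_norm_le_const hbound
  have hI0 : 0 ≤ I := by
    have : ((k : ℝ) + 1) * (T / n) - ((k : ℝ) - 1) * (T / n) = 2 * (T / n) := by ring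
    apply intervalIntegral.integral_nonneg (by linarith) (fun τ _ => abs_nonneg _)
  rw [show |T / n - 0| = T / n by rw [sub_zero]; exact abs_of_pos hh] at hnorm
  unfold gam
  rw [abs_mul]
  have hnT : |(n:ℝ)/T| = (n:ℝ)/T := abs_of_pos (div_pos (by exact_mod_cast hn) hT)
  rw [hnT]
  calc (n:ℝ)/T * |∫ u in (0:ℝ)..(T/n), ∫ v in ((k : ℝ) * T / n)..(((k : ℝ) + 1) * T / n), R (v - u)|
      ≤ (n:ℝ)/T * (I * (T/n)) := by
        apply mul_le_mul_of_nonneg_left _ (div_pos (by exact_mod_cast hn) hT).le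
        simpa [Real.norm_eq_abs] using hnorm
    _ = I := by
        field_simp

lemma gam_abs_le_const (R : ℝ → ℝ) {M : ℝ} (hM : ∀ τ, |R τ| ≤ M) {T : ℝ} (hT : 0 < T)
    {n : ℕ} (hn : 0 < n) (k : ℤ) :
    |gam R T n k| ≤ M * (T / n) := by
  have hh : 0 < T / n := div_pos hT (by exact_mod_cast hn)
  have hbound : ∀ u ∈ Set.uIoc (0:ℝ) (T / n),
      ‖∫ v in ((k : ℝ) * T / n)..(((k : ℝ) + 1) * T / n), R (v - u)‖ ≤ M * (T / n) := by
    intro u _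
    have h := intervalIntegral.norm_integral_le_of_norm_le_const
      (a := (k : ℝ) * T / n) (b := ((k : ℝ) + 1) * T / n) (C := M)
      (f := fun v => R (v - u)) (fun x _ => by simpa [Real.norm_eq_abs] using hM (x - u))
    calc ‖∫ v in ((k : ℝ) * T / n)..(((k : ℝ) + 1) * T / n), R (v - u)‖
        ≤ M * |((k : ℝ) + 1) * T / n - (k : ℝ) * T / n| := h
      _ = M * (T / n) := by
          rw [show ((k : ℝ) + 1) * T / n - (k : ℝ) * T / n = T / n by ring, abs_of_pos hh]
  have hnorm := intervalIntegral.norm_integral_le_of_norm_le_const hbound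
  rw [show |T / n - 0| = T / n by rw [sub_zero]; exact abs_of_pos hh] at hnorm
  unfold gam
  rw [abs_mul]
  have hnT : |(n:ℝ)/T| = (n:ℝ)/T := abs_of_pos (div_pos (by exact_mod_cast hn) hT)
  rw [hnT]
  calc (n:ℝ)/T * |∫ u in (0:ℝ)..(T/n), ∫ v in ((k : ℝ) * T / n)..(((k : ℝ) + 1) * T / n), R (v - u)|
      ≤ (n:ℝ)/T * (M * (T/n) * (T/n)) := by
        apply mul_le_mul_of_nonneg_left _ (div_pos (by exact_mod_cast hn) hT).le
        simpa [Real.norm_eq_abs] using hnorm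
    _ = M * (T / n) := by
        field_simp

lemma sum_offdiag (n : ℕ) (g : ℕ → ℝ) :
    (∑ i ∈ range n, ∑ j ∈ range n,
      (if i = j then (0:ℝ) else g (n - Nat.dist i j)))
    = 2 * ∑ k ∈ range n, (k : ℝ) * g k := by
  have hsplit : ∀ i ∈ range n, ∀ j ∈ range n,
      (if i = j then (0:ℝ) else g (n - Nat.dist i j))
      = (if i < j then g (n - (j - i)) else 0) + (if j < i then g (n - (i - j)) else 0) := by
    intro i _ j _
    rcases lt_trichotomy i j with h | h | h
    · rw [if_neg h.ne, if_pos h, if_neg (by omega), Nat.dist_eq_sub_of_le h.le, add_zero]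
    · simp [h]
    · rw [if_neg h.ne', if_neg (by omega), if_pos h, Nat.dist_eq_sub_of_le_right h.le, zero_add]
  rw [Finset.sum_congr rfl (fun i hi => Finset.sum_congr rfl (fun j hj => hsplit i hi j hj))]
  have hG : ∀ m : ℕ, (∑ i ∈ range n, ∑ j ∈ range n, (if i < j then g (n - (j - i)) else 0))
      = ∑ k ∈ range n, (k : ℝ) * g k := by
    intro _
    rw [Finset.sum_comm]
    have h1 : ∀ j ∈ range n, (∑ i ∈ range n, (if i < j then g (n - (j - i)) else 0))
        = ∑ k ∈ range n, (if n - j ≤ k then g k else 0) := by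
      intro j hj
      rw [mem_range] at hj
      rw [← Finset.sum_filter, ← Finset.sum_filter]
      have e1 : filter (fun i => i < j) (range n) = range j := by
        ext i; simp [Finset.mem_filter, Finset.mem_range]; omega
      have e2 : filter (fun k => n - j ≤ k) (range n) = Ico (n - j) n := by
        ext k; simp [Finset.mem_filter, Finset.mem_range, Finset.mem_Ico]; omega
      rw [e1, e2]
      have e3 : n = (n - j) + j := by omega
      rw [show (Ico (n-j) n) = Ico (n-j) ((n-j)+j) from by rw [← e3]]
      rw [Finset.sum_Ico_eq_sum_range]
      rw [show (n - j + j - (n - j)) = j from by omega]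
      apply Finset.sum_congr rfl
      intro i hi
      rw [mem_range] at hi
      congr 1
      omega
    rw [Finset.sum_congr rfl h1, Finset.sum_comm]
    apply Finset.sum_congr rfl
    intro k hk
    rw [mem_range] at hk
    rw [← Finset.sum_filter]
    have e4 : filter (fun j => n - j ≤ k) (range n) = Ico (n - k) n := by
      ext j; simp [Finset.mem_filter, Finset.mem_range, Finset.mem_Ico]; omega
    rw [e4, Finset.sum_const, Nat.card_Ico]
    rw [show n - (n - k) = k from by omega]
    simp [nsmul_eq_mul]
  have hG2 : (∑ i ∈ range n, ∑ j ∈ range n, (if j < i then g (n - (i - j)) else 0))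
      = ∑ k ∈ range n, (k : ℝ) * g k := by
    rw [Finset.sum_comm]; exact hG 0
  simp only [Finset.sum_add_distrib]
  rw [hG 0, hG2]; ring

lemma entry_sq (R : ℝ → ℝ) (hEven : ∀ τ, R (-τ) = R τ) (T : ℝ) {n : ℕ} (i j : Fin n) :
    (AMat R T n i j - AHat R T n i j) ^ 2
      = if (i : ℕ) = (j : ℕ) then (0:ℝ)
        else (gam R T n ((n - Nat.dist (i : ℕ) (j : ℕ) : ℕ) : ℤ)) ^ 2 := by
  have hn : 0 < n := i.pos
  have hval : ((j - i : Fin n) : ℕ) = ((j : ℕ) + (n - (i : ℕ))) % n := by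
    rw [Fin.sub_def]
    simp [Nat.add_comm]
  rcases lt_trichotomy (i : ℕ) (j : ℕ) with h | h | h
  · rw [if_neg h.ne]
    have hmod : ((j : ℕ) + (n - (i : ℕ))) % n = (j : ℕ) - (i : ℕ) := by
      have hjn := j.isLt
      have hin := i.isLt
      rw [show (j : ℕ) + (n - (i : ℕ)) = ((j : ℕ) - (i : ℕ)) + n from by omega,
        Nat.add_mod_right, Nat.mod_eq_of_lt (by omega)]
    rw [AMat, AHat, hval, hmod, gamHat, if_neg (by omega)]
    rw [Nat.dist_eq_sub_of_le h.le]
    have e1 : (((j : ℕ) - (i : ℕ) : ℕ) : ℤ) = (j : ℤ) - (i : ℤ) := by omega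
    rw [e1]
    have e2 : ((n : ℤ) - ((j : ℤ) - (i : ℤ))) = ((n - ((j:ℕ) - (i:ℕ)) : ℕ) : ℤ) := by
      have hjn := j.isLt; omega
    rw [e2]
    ring
  · rw [if_pos h]
    have hmod : ((j : ℕ) + (n - (i : ℕ))) % n = 0 := by
      have hin := i.isLt
      rw [show (j : ℕ) + (n - (i : ℕ)) = n from by omega, Nat.mod_self]
    rw [AMat, AHat, hval, hmod, gamHat, if_pos rfl, show ((j:ℤ) - (i:ℤ)) = 0 from by omega]
    ring
  · rw [if_neg h.ne']
    have hjn := j.isLt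
    have hin := i.isLt
    have hmod : ((j : ℕ) + (n - (i : ℕ))) % n = n - ((i : ℕ) - (j : ℕ)) := by
      rw [show (j : ℕ) + (n - (i : ℕ)) = n - ((i:ℕ) - (j:ℕ)) from by omega,
        Nat.mod_eq_of_lt (by omega)]
    rw [AMat, AHat, hval, hmod, gamHat, if_neg (by omega)]
    have e1 : ((j : ℤ) - (i : ℤ)) = -(((i : ℕ) - (j : ℕ) : ℕ) : ℤ) := by omega
    rw [e1, gam_neg R hEven]
    have e2 : ((n : ℤ) - ((n - ((i:ℕ) - (j:ℕ)) : ℕ) : ℤ)) = (((i:ℕ) - (j:ℕ) : ℕ) : ℤ) := by omega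
    rw [e2]
    rw [Nat.dist_eq_sub_of_le_right h.le]
    ring

lemma key_bound (R : ℝ → ℝ) (hCont : Continuous R) (hInt : Integrable R)
    {M : ℝ} (hM : ∀ τ, |R τ| ≤ M) (hM0 : 0 ≤ M)
    {T : ℝ} (hT : 0 < T) {n : ℕ} (hn : 0 < n) :
    ∑ k ∈ range n, (k : ℝ) * (gam R T n (k : ℤ)) ^ 2
      ≤ 2 * M * ((∫ τ in (0:ℝ)..T, τ * |R τ|) + (T / n) * ∫ τ, |R τ|) := by
  have hn' : (0:ℝ) < n := by exact_mod_cast hn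
  have hn1 : (1:ℝ) ≤ n := by exact_mod_cast hn
  set h := T / n with hhdef
  have hh : 0 < h := div_pos hT hn'
  have hTeq : (n : ℝ) * h = T := by rw [hhdef]; field_simp
  set φ : ℝ → ℝ := fun τ => (τ + h) * |R τ| with hφdef
  have hφc : Continuous φ := (continuous_id.add continuous_const).mul hCont.abs
  have hφi : ∀ a b : ℝ, IntervalIntegrable φ volume a b := fun a b =>
    hφc.intervalIntegrable a b
  have hRi : ∀ a b : ℝ, IntervalIntegrable (fun τ => |R τ|) volume a b := fun a b =>
    (hCont.abs).intervalIntegrable a b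
  have hRabs : Integrable (fun τ => |R τ|) := hInt.abs
  set C := ∫ τ, |R τ| with hCdef
  set J := ∫ τ in (0:ℝ)..T, τ * |R τ| with hJdef
  -- termwise bound
  have hterm : ∀ k ∈ range n, (k : ℝ) * (gam R T n (k : ℤ)) ^ 2
      ≤ M * ∫ τ in (((k:ℝ) - 1) * h)..(((k:ℝ) + 1) * h), φ τ := by
    intro k hk
    have b1 := gam_abs_le_const R hM hT hn (k : ℤ)
    have b2 := gam_abs_le_int R hCont hT hn (k : ℤ)
    rw [Int.cast_natCast] at b2
    rw [← hhdef] at b1 b2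
    have hIk0 : 0 ≤ ∫ τ in (((k:ℝ) - 1) * h)..(((k:ℝ) + 1) * h), |R τ| := by
      apply intervalIntegral.integral_nonneg _ (fun τ _ => abs_nonneg _)
      nlinarith
    have hsq : (gam R T n (k : ℤ)) ^ 2
        ≤ (M * h) * ∫ τ in (((k:ℝ) - 1) * h)..(((k:ℝ) + 1) * h), |R τ| := by
      have e : (gam R T n (k : ℤ)) ^ 2 = |gam R T n (k : ℤ)| * |gam R T n (k : ℤ)| := by
        rw [abs_mul_abs_self, sq]
      rw [e]
      exact mul_le_mul b1 b2 (abs_nonneg _) (by positivity)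
    have step1 : (k : ℝ) * (gam R T n (k : ℤ)) ^ 2
        ≤ M * ∫ τ in (((k:ℝ) - 1) * h)..(((k:ℝ) + 1) * h), ((k:ℝ) * h) * |R τ| := by
      rw [intervalIntegral.integral_const_mul]
      calc (k : ℝ) * (gam R T n (k : ℤ)) ^ 2
          ≤ (k : ℝ) * ((M * h) * ∫ τ in (((k:ℝ) - 1) * h)..(((k:ℝ) + 1) * h), |R τ|) :=
            mul_le_mul_of_nonneg_left hsq (Nat.cast_nonneg k)
        _ = M * ((k:ℝ) * h * ∫ τ in (((k:ℝ) - 1) * h)..(((k:ℝ) + 1) * h), |R τ|) := by ring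
    refine step1.trans (mul_le_mul_of_nonneg_left ?_ hM0)
    apply intervalIntegral.integral_mono_on (by nlinarith) ((hRi _ _).const_mul _) (hφi _ _)
    intro τ hτ
    have h1 : ((k:ℝ) - 1) * h ≤ τ := hτ.1
    have : (k:ℝ) * h ≤ τ + h := by nlinarith
    exact mul_le_mul_of_nonneg_right this (abs_nonneg _)
  -- summing the integrals
  have hsplit : ∀ k ∈ range n,
      (∫ τ in (((k:ℝ) - 1) * h)..(((k:ℝ) + 1) * h), φ τ)
      = (∫ τ in (((k:ℝ) - 1) * h)..((k:ℝ) * h), φ τ)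
        + ∫ τ in ((k:ℝ) * h)..(((k:ℝ) + 1) * h), φ τ := by
    intro k _
    rw [intervalIntegral.integral_add_adjacent_intervals (hφi _ _) (hφi _ _)]
  have hsum1 : (∑ k ∈ range n, ∫ τ in (((k:ℝ) - 1) * h)..((k:ℝ) * h), φ τ)
      = ∫ τ in (-h)..(((n:ℝ) - 1) * h), φ τ := by
    have key := intervalIntegral.sum_integral_adjacent_intervals (μ := volume) (f := φ)
      (a := fun k : ℕ => ((k:ℝ) - 1) * h) (n := n) (fun k _ => hφi _ _)
    have e0 : (fun k : ℕ => ((k:ℝ) - 1) * h) 0 = -h := by norm_num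
    have en : (fun k : ℕ => ((k:ℝ) - 1) * h) n = ((n:ℝ) - 1) * h := rfl
    beta_reduce at e0 en
    rw [e0, en] at key
    rw [← key]
    apply Finset.sum_congr rfl
    intro k _
    have e1 : (fun k : ℕ => ((k:ℝ) - 1) * h) k = ((k:ℝ) - 1) * h := rfl
    have e2 : (fun k : ℕ => ((k:ℝ) - 1) * h) (k + 1) = (k:ℝ) * h := by
      show ((((k + 1 : ℕ)):ℝ) - 1) * h = (k:ℝ) * h
      push_cast; ring
    beta_reduce at e1 e2
    rw [e1, e2]
  have hsum2 : (∑ k ∈ range n, ∫ τ in ((k:ℝ) * h)..(((k:ℝ) + 1) * h), φ τ)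
      = ∫ τ in (0:ℝ)..T, φ τ := by
    have key := intervalIntegral.sum_integral_adjacent_intervals (μ := volume) (f := φ)
      (a := fun k : ℕ => (k:ℝ) * h) (n := n) (fun k _ => hφi _ _)
    have e0 : (fun k : ℕ => (k:ℝ) * h) 0 = 0 := by norm_num
    have en : (fun k : ℕ => (k:ℝ) * h) n = T := hTeq
    beta_reduce at e0 en
    rw [e0, en] at key
    rw [← key]
    apply Finset.sum_congr rfl
    intro k _
    have e1 : (fun k : ℕ => (k:ℝ) * h) k = (k:ℝ) * h := rfl
    have e2 : (fun k : ℕ => (k:ℝ) * h) (k + 1) = ((k:ℝ) + 1) * h := by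
      show (((k:ℕ) + 1 : ℕ):ℝ) * h = ((k:ℝ) + 1) * h
      push_cast; ring
    beta_reduce at e1 e2
    rw [e1, e2]
  have hφ_nonneg : 0 ≤ᵐ[volume.restrict (Set.Ioc (-h) T)] φ := by
    refine (ae_restrict_iff' measurableSet_Ioc).2 (Eventually.of_forall fun τ hτ => ?_)
    show (0:ℝ) ≤ (τ + h) * |R τ|
    have : 0 < τ + h := by have := hτ.1; linarith
    exact mul_nonneg this.le (abs_nonneg _)
  have hmono1 : (∫ τ in (-h)..(((n:ℝ) - 1) * h), φ τ)
      ≤ ∫ τ in (-h)..T, φ τ := by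
    apply intervalIntegral.integral_mono_interval (by nlinarith) (by nlinarith) (by nlinarith)
      hφ_nonneg (hφi _ _)
  have hmono2 : (∫ τ in (0:ℝ)..T, φ τ)
      ≤ ∫ τ in (-h)..T, φ τ := by
    apply intervalIntegral.integral_mono_interval (by nlinarith) hT.le le_rfl
      hφ_nonneg (hφi _ _)
  -- bound the big integral
  have c1 : Continuous (fun τ : ℝ => τ * |R τ|) := continuous_id.mul hCont.abs
  have c2 : Continuous (fun τ : ℝ => h * |R τ|) := continuous_const.mul hCont.abs
  have hbig : (∫ τ in (-h)..T, φ τ) ≤ J + h * C := by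
    have hdecomp : (∫ τ in (-h)..T, φ τ)
        = (∫ τ in (-h)..T, τ * |R τ|) + ∫ τ in (-h)..T, h * |R τ| := by
      rw [← intervalIntegral.integral_add (c1.intervalIntegrable _ _)
        (c2.intervalIntegrable _ _)]
      apply intervalIntegral.integral_congr
      intro τ _
      show (τ + h) * |R τ| = τ * |R τ| + h * |R τ|
      ring
    rw [hdecomp]
    have hpart1 : (∫ τ in (-h)..T, τ * |R τ|) ≤ J := by
      rw [← intervalIntegral.integral_add_adjacent_intervals (a := -h) (b := 0) (c := T)
        (c1.intervalIntegrable _ _) (c1.intervalIntegrable _ _)]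
      have hneg : (∫ τ in (-h)..(0:ℝ), τ * |R τ|) ≤ 0 := by
        have hle := intervalIntegral.integral_mono_on (a := -h) (b := (0:ℝ)) (μ := volume)
          (f := fun τ => τ * |R τ|) (g := fun _ => (0:ℝ)) (by linarith)
          (c1.intervalIntegrable _ _) intervalIntegrable_const
          (fun τ hτ => mul_nonpos_of_nonpos_of_nonneg hτ.2 (abs_nonneg _))
        simpa using hle
      linarith [hneg]
    have hpart2 : (∫ τ in (-h)..T, h * |R τ|) ≤ h * C := by
      rw [intervalIntegral.integral_const_mul]
      apply mul_le_mul_of_nonneg_left _ hh.le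
      rw [intervalIntegral.integral_of_le (by linarith)]
      exact setIntegral_le_integral hRabs (Eventually.of_forall fun τ => abs_nonneg _)
    linarith
  calc ∑ k ∈ range n, (k : ℝ) * (gam R T n (k : ℤ)) ^ 2
      ≤ ∑ k ∈ range n, M * ∫ τ in (((k:ℝ) - 1) * h)..(((k:ℝ) + 1) * h), φ τ :=
        Finset.sum_le_sum hterm
    _ = M * ((∑ k ∈ range n, ∫ τ in (((k:ℝ) - 1) * h)..((k:ℝ) * h), φ τ)
        + ∑ k ∈ range n, ∫ τ in ((k:ℝ) * h)..(((k:ℝ) + 1) * h), φ τ) := by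
        rw [← Finset.mul_sum, ← Finset.sum_add_distrib]
        congr 1
        exact Finset.sum_congr rfl hsplit
    _ ≤ M * ((J + h * C) + (J + h * C)) := by
        apply mul_le_mul_of_nonneg_left _ hM0
        have := hsum1 ▸ hmono1
        have := hsum2 ▸ hmono2
        rw [hsum1, hsum2]
        linarith [hmono1.trans hbig, hmono2.trans hbig]
    _ = 2 * M * (J + h * C) := by ring

theorem stmt_8 (R : ℝ → ℝ) (hEven : ∀ τ, R (-τ) = R τ) (hCont : Continuous R)
    (hBdd : ∃ M, ∀ τ, |R τ| ≤ M) (hInt : Integrable R) :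
    ∀ ε > 0, ∃ T₀ > 0, ∀ T ≥ T₀, ∃ n₀ : ℕ, 0 < n₀ ∧ ∀ n ≥ n₀,
      (∑ i, ∑ j, (AMat R T n i j - AHat R T n i j) ^ 2) / T ≤ ε := by
  obtain ⟨M₀, hM₀⟩ := hBdd
  set M := max M₀ 1 with hMdef
  have hM1 : (1:ℝ) ≤ M := le_max_right _ _
  have hM0 : (0:ℝ) ≤ M := by linarith
  have hMpos : (0:ℝ) < M := by linarith
  have hM : ∀ τ, |R τ| ≤ M := fun τ => (hM₀ τ).trans (le_max_left _ _)
  have hRabs : Integrable (fun τ => |R τ|) := hInt.abs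
  have c1 : Continuous (fun τ : ℝ => τ * |R τ|) := continuous_id.mul hCont.abs
  set C := ∫ τ, |R τ| with hCdef
  have hC0 : 0 ≤ C := integral_nonneg fun τ => abs_nonneg _
  intro ε hε
  have htail : Tendsto (fun S : ℝ => ∫ τ in Set.Ioi S, |R τ|) atTop (nhds 0) := by
    have h1 := tendsto_setIntegral_of_antitone (μ := volume) (f := fun τ => |R τ|)
      (s := fun S : ℝ => Set.Ioi S) (fun S => measurableSet_Ioi)
      (fun a b hab => Set.Ioi_subset_Ioi hab) ⟨0, hRabs.integrableOn⟩
    have h2 : (⋂ S : ℝ, Set.Ioi S) = ∅ := by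
      ext x
      simp only [Set.mem_iInter, Set.mem_Ioi, Set.mem_empty_iff_false, iff_false, not_forall,
        not_lt]
      exact ⟨x, le_rfl⟩
    rw [h2] at h1
    simpa using h1
  set δ := ε / (16 * M) with hδdef
  have hδ : 0 < δ := by positivity
  obtain ⟨S₀, hS₀tail, hS₀1⟩ :=
    ((htail.eventually (gt_mem_nhds hδ)).and (eventually_ge_atTop (1:ℝ))).exists
  have hS₀0 : (0:ℝ) < S₀ := by linarith
  refine ⟨S₀ + 16 * M * S₀ * C / ε, by positivity, fun T hT => ?_⟩
  have hquot : 0 ≤ 16 * M * S₀ * C / ε := by positivity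
  have hTS₀ : S₀ ≤ T := by linarith
  have hT0 : 0 < T := lt_of_lt_of_le hS₀0 hTS₀
  have hTbig : 16 * M * S₀ * C / ε ≤ T := by linarith
  refine ⟨⌈8 * M * C / ε⌉₊ + 1, Nat.succ_pos _, fun n hn => ?_⟩
  have hnpos : 0 < n := lt_of_lt_of_le (Nat.succ_pos _) hn
  have hn' : (0:ℝ) < n := by exact_mod_cast hnpos
  -- Frobenius norm identity
  have hsum : (∑ i, ∑ j, (AMat R T n i j - AHat R T n i j) ^ 2)
      = 2 * ∑ k ∈ range n, (k : ℝ) * (gam R T n (k : ℤ)) ^ 2 := by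
    have e1 : (∑ i, ∑ j, (AMat R T n i j - AHat R T n i j) ^ 2)
        = ∑ i : Fin n, ∑ j : Fin n, (if (i : ℕ) = (j : ℕ) then (0:ℝ)
            else (gam R T n ((n - Nat.dist (i : ℕ) (j : ℕ) : ℕ) : ℤ)) ^ 2) :=
      Finset.sum_congr rfl fun i _ => Finset.sum_congr rfl fun j _ => entry_sq R hEven T i j
    rw [e1]
    have e2 : ∀ i : Fin n,
        (∑ j : Fin n, (if (i : ℕ) = (j : ℕ) then (0:ℝ)
            else (gam R T n ((n - Nat.dist (i : ℕ) (j : ℕ) : ℕ) : ℤ)) ^ 2))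
        = ∑ j ∈ range n, (if (i : ℕ) = j then (0:ℝ)
            else (gam R T n ((n - Nat.dist (i : ℕ) j : ℕ) : ℤ)) ^ 2) := fun i =>
      Fin.sum_univ_eq_sum_range (fun j => (if (i : ℕ) = j then (0:ℝ)
            else (gam R T n ((n - Nat.dist (i : ℕ) j : ℕ) : ℤ)) ^ 2)) n
    rw [Finset.sum_congr rfl fun i _ => e2 i]
    rw [Fin.sum_univ_eq_sum_range (fun i => ∑ j ∈ range n, (if i = j then (0:ℝ)
            else (gam R T n ((n - Nat.dist i j : ℕ) : ℤ)) ^ 2)) n]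
    exact sum_offdiag n (fun k => (gam R T n (k : ℤ)) ^ 2)
  rw [hsum]
  set J := ∫ τ in (0:ℝ)..T, τ * |R τ| with hJdef
  have hkb := key_bound R hCont hInt hM hM0 hT0 hnpos
  rw [← hJdef, ← hCdef] at hkb
  -- bound J
  have hJ : J ≤ S₀ * C + T * δ := by
    have hsplitJ : J = (∫ τ in (0:ℝ)..S₀, τ * |R τ|) + ∫ τ in S₀..T, τ * |R τ| := by
      rw [hJdef, ← intervalIntegral.integral_add_adjacent_intervals
        (c1.intervalIntegrable 0 S₀) (c1.intervalIntegrable S₀ T)]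
    have hJa : (∫ τ in (0:ℝ)..S₀, τ * |R τ|) ≤ S₀ * C := by
      have h1 : (∫ τ in (0:ℝ)..S₀, τ * |R τ|) ≤ ∫ τ in (0:ℝ)..S₀, S₀ * |R τ| := by
        apply intervalIntegral.integral_mono_on hS₀0.le (c1.intervalIntegrable _ _)
          ((continuous_const.mul hCont.abs).intervalIntegrable _ _)
        intro τ hτ
        exact mul_le_mul_of_nonneg_right hτ.2 (abs_nonneg _)
      rw [intervalIntegral.integral_const_mul] at h1
      refine h1.trans (mul_le_mul_of_nonneg_left ?_ hS₀0.le)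
      rw [intervalIntegral.integral_of_le hS₀0.le]
      exact setIntegral_le_integral hRabs (Eventually.of_forall fun τ => abs_nonneg _)
    have hJb : (∫ τ in S₀..T, τ * |R τ|) ≤ T * δ := by
      have h1 : (∫ τ in S₀..T, τ * |R τ|) ≤ ∫ τ in S₀..T, T * |R τ| := by
        apply intervalIntegral.integral_mono_on hTS₀ (c1.intervalIntegrable _ _)
          ((continuous_const.mul hCont.abs).intervalIntegrable _ _)
        intro τ hτ
        exact mul_le_mul_of_nonneg_right hτ.2 (abs_nonneg _)
      rw [intervalIntegral.integral_const_mul] at h1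
      refine h1.trans (mul_le_mul_of_nonneg_left ?_ hT0.le)
      rw [intervalIntegral.integral_of_le hTS₀]
      refine le_trans ?_ hS₀tail.le
      apply setIntegral_mono_set hRabs.integrableOn
        (Eventually.of_forall fun τ => abs_nonneg _)
      exact (Set.Ioc_subset_Ioi_self).eventuallyLE
    linarith
  -- final arithmetic
  rw [div_le_iff₀ hT0]
  have hδM : 4 * M * δ = ε / 4 := by
    rw [hδdef]; field_simp; ring
  have hS₀C : 4 * M * (S₀ * C) ≤ ε * T / 4 := by
    have h1 : 16 * M * S₀ * C ≤ ε * T := by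
      rw [div_le_iff₀ hε] at hTbig
      linarith
    linarith
  have hnC : 2 * (2 * M * ((T / n) * C)) ≤ ε * T / 2 := by
    have h8 : 8 * M * C / ε ≤ (n : ℝ) := by
      have h9 : ((⌈8 * M * C / ε⌉₊ : ℕ) : ℝ) ≤ (n : ℝ) := by
        exact_mod_cast le_trans (Nat.le_succ _) hn
      exact (Nat.le_ceil _).trans h9
    have h10 : 8 * M * C ≤ ε * n := by
      rw [div_le_iff₀ hε] at h8
      linarith
    have h11 := mul_le_mul_of_nonneg_right h10 (div_pos hT0 hn').le
    have e : ε * (n:ℝ) * (T / n) = ε * T := by field_simp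
    rw [e] at h11
    have e2 : 8 * M * C * (T / n) = 4 * (2 * M * ((T / n) * C)) := by ring
    rw [e2] at h11
    linarith
  calc 2 * ∑ k ∈ range n, (k : ℝ) * (gam R T n (k : ℤ)) ^ 2
      ≤ 2 * (2 * M * (J + (T / n) * C)) := by linarith
    _ = 4 * M * J + 2 * (2 * M * ((T / n) * C)) := by ring
    _ ≤ 4 * M * (S₀ * C + T * δ) + ε * T / 2 := by
        have := mul_le_mul_of_nonneg_left hJ (by linarith : (0:ℝ) ≤ 4 * M)
        linarith
    _ = 4 * M * (S₀ * C) + (4 * M * δ) * T + ε * T / 2 := by ring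
    _ ≤ ε * T / 4 + (ε / 4) * T + ε * T / 2 := by
        rw [hδM]
        linarith
    _ = ε * T := by ring
end
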